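/- For τ > 0 and a matrix Y ∈ ℝ^{m×n} with SVD Y = U diag(σ₁,…,σ_r) Vᵀ, the matrix X★ = U diag((σ₁−τ)₊,…,(σ_r−τ)₊) Vᵀ is the unique minimizer of X ↦ τ‖X‖_* + (1/2)‖X − Y‖_F², where ‖·‖_* is the nuclear norm and (x)₊ = max(x,0). -/

import Mathlib

/-!
Split `Y = X★ + W` with `W = U diag(min(σᵢ, τ)) Vᵀ`. Then `‖W‖_op ≤ τ` and
`⟨W, X★⟩_F = τ ∑ (σᵢ - τ)₊ ≥ τ ‖X★‖_*`, i.e. `W` is a subgradient of `τ ‖·‖_*` at `X★`.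
Together with the duality `⟨W, X⟩_F ≤ ‖W‖_op ‖X‖_*`, completing the square gives
`τ ‖X‖_* + ½‖X - Y‖² ≥ τ ‖X★‖_* + ½‖X★ - Y‖² + ½‖X - X★‖²`, hence minimality and uniqueness.

The duality is Cauchy–Schwarz column by column in an orthonormal eigenbasis of `XᵀX`. The bound
`‖U diag(d) Vᵀ‖_* ≤ ∑ dᵢ` comes from testing against the polar factor `W₀` of the matrix,
which has `‖W₀‖_op ≤ 1` and `⟨W₀, X⟩_F = ‖X‖_*`.
-/

open Matrix BigOperators Finset

/-- The nuclear norm of a real matrix: the sum of the square roots of the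
eigenvalues of AᵀA (i.e. the sum of the singular values of A). -/
noncomputable def nuclearNormR {m n : ℕ} (A : Matrix (Fin m) (Fin n) ℝ) : ℝ :=
  ∑ i, Real.sqrt ((show (Aᵀ * A).IsHermitian by
    rw [Matrix.IsHermitian, Matrix.conjTranspose_eq_transpose_of_trivial, Matrix.transpose_mul,
      Matrix.transpose_transpose]).eigenvalues i)

open scoped Matrix.Norms.L2Operator

namespace Matrix

theorem isHermitian_transpose_mul_self {m n : Type*} [Fintype m] (A : Matrix m n ℝ) :
    (Aᵀ * A).IsHermitian := by
  simpa using isHermitian_conjTranspose_mul_self A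

theorem sum_sq_apply_eq_transpose_mul_self_apply {m n : Type*} [Fintype m] (A : Matrix m n ℝ)
    (j : n) : ∑ i, A i j ^ 2 = (Aᵀ * A) j j := by
  simp only [mul_apply, transpose_apply, sq]

variable {l m n : Type*} [Fintype l] [Fintype m] [Fintype n]

theorem trace_transpose_mul_eq_sum_sum (A B : Matrix m n ℝ) :
    trace (Aᵀ * B) = ∑ i, ∑ j, A i j * B i j := by
  simp only [trace, diag, mul_apply, transpose_apply]
  exact sum_comm

theorem trace_transpose_mul_self_eq_sum_sum_sq (A : Matrix m n ℝ) :
    trace (Aᵀ * A) = ∑ i, ∑ j, A i j ^ 2 := by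
  simp only [trace_transpose_mul_eq_sum_sum, sq]

theorem sum_sq_apply_le_l2_opNorm_sq [DecidableEq n] (A : Matrix m n ℝ) (j : n) :
    ∑ i, A i j ^ 2 ≤ ‖A‖ ^ 2 := by
  have h := A.l2_opNorm_mulVec (WithLp.toLp 2 (Pi.single j 1))
  simp only [EuclideanSpace.equiv, mulVec_single_one] at h
  simpa [EuclideanSpace.real_norm_sq_eq] using pow_le_pow_left₀ (norm_nonneg _) h 2

theorem apply_le_l2_opNorm [DecidableEq n] (A : Matrix m n ℝ) (i : m) (j : n) : A i j ≤ ‖A‖ :=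
  le_of_sq_le_sq ((single_le_sum (fun k _ => sq_nonneg (A k j)) (mem_univ i)).trans
    (A.sum_sq_apply_le_l2_opNorm_sq j)) (norm_nonneg A)

theorem l2_opNorm_transpose [DecidableEq m] [DecidableEq n] (A : Matrix m n ℝ) : ‖Aᵀ‖ = ‖A‖ := by
  simpa using A.l2_opNorm_conjTranspose

theorem l2_opNorm_le_one_of_l2_opNorm_transpose_mul_self_le_one [DecidableEq n] (A : Matrix m n ℝ)
    (h : ‖Aᵀ * A‖ ≤ 1) : ‖A‖ ≤ 1 := by
  rw [← conjTranspose_eq_transpose_of_trivial, l2_opNorm_conjTranspose_mul_self] at h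
  nlinarith [norm_nonneg A]

theorem l2_opNorm_diagonal_le [DecidableEq n] {d : n → ℝ} {t : ℝ} (ht : 0 ≤ t)
    (hd : ∀ i, |d i| ≤ t) : ‖diagonal d‖ ≤ t := by
  rw [l2_opNorm_diagonal]
  exact pi_norm_le_iff_of_nonneg ht |>.2 hd

theorem l2_opNorm_le_one_of_transpose_mul_self_eq_one [DecidableEq n] (U : Matrix m n ℝ)
    (hU : Uᵀ * U = 1) : ‖U‖ ≤ 1 := by
  refine U.l2_opNorm_le_one_of_l2_opNorm_transpose_mul_self_le_one ?_
  rw [hU, ← diagonal_one]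
  exact l2_opNorm_diagonal_le zero_le_one fun _ => by simp

theorem l2_opNorm_mul_mul_le_of_le_one {k : Type*} [Fintype k] [DecidableEq l] [DecidableEq n]
    [DecidableEq k] {A : Matrix m l ℝ} {B : Matrix n k ℝ} (hA : ‖A‖ ≤ 1)
    (hB : ‖B‖ ≤ 1) (M : Matrix l n ℝ) : ‖A * M * B‖ ≤ ‖M‖ :=
  calc ‖A * M * B‖ ≤ ‖A‖ * ‖M‖ * ‖B‖ :=
        (l2_opNorm_mul _ _).trans (by gcongr; exact l2_opNorm_mul _ _)
    _ ≤ 1 * ‖M‖ * 1 := by gcongr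
    _ = ‖M‖ := by ring

theorem l2_opNorm_mul_diagonal_mul_transpose_le [DecidableEq l] [DecidableEq n]
    {U : Matrix m l ℝ} {V : Matrix n l ℝ} (hU : Uᵀ * U = 1) (hV : Vᵀ * V = 1) {d : l → ℝ}
    {t : ℝ} (ht : 0 ≤ t) (hd : ∀ i, |d i| ≤ t) : ‖U * diagonal d * Vᵀ‖ ≤ t := by
  have hVt : ‖Vᵀ‖ ≤ 1 := V.l2_opNorm_transpose ▸ V.l2_opNorm_le_one_of_transpose_mul_self_eq_one hV
  exact (l2_opNorm_mul_mul_le_of_le_one (U.l2_opNorm_le_one_of_transpose_mul_self_eq_one hU) hVt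
    _).trans (l2_opNorm_diagonal_le ht hd)

theorem IsHermitian.exists_orthogonal_transpose_mul_mul_eq_diagonal [DecidableEq n]
    {S : Matrix n n ℝ} (hS : S.IsHermitian) :
    ∃ Q : Matrix n n ℝ, Qᵀ * Q = 1 ∧ Q * Qᵀ = 1 ∧ Qᵀ * S * Q = diagonal hS.eigenvalues := by
  have h₁ := Unitary.coe_star_mul_self hS.eigenvectorUnitary
  have h₂ := Unitary.coe_mul_star_self hS.eigenvectorUnitary
  have h₃ := hS.conjStarAlgAut_star_eigenvectorUnitary
  simp only [Unitary.conjStarAlgAut_star_apply, RCLike.ofReal_real_eq_id,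
    Function.id_comp] at h₃
  simp only [star_eq_conjTranspose, conjTranspose_eq_transpose_of_trivial] at h₁ h₂ h₃
  exact ⟨_, h₁, h₂, h₃⟩

theorem trace_transpose_mul_diagonal_mul_transpose [DecidableEq l] {U : Matrix m l ℝ}
    {V : Matrix n l ℝ} (hU : Uᵀ * U = 1) (hV : Vᵀ * V = 1) (c d : l → ℝ) :
    trace ((U * diagonal c * Vᵀ)ᵀ * (U * diagonal d * Vᵀ)) = ∑ i, c i * d i := by
  have h : (U * diagonal c * Vᵀ)ᵀ * (U * diagonal d * Vᵀ)
      = V * (diagonal c * (Uᵀ * U) * diagonal d * Vᵀ) := by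
    simp only [transpose_mul, diagonal_transpose, transpose_transpose, Matrix.mul_assoc]
  rw [h, trace_mul_comm, hU, Matrix.mul_one, Matrix.mul_assoc, hV, Matrix.mul_one,
    diagonal_mul_diagonal, trace_diagonal]

end Matrix

section NuclearNorm

variable {m n r : ℕ}

theorem nuclearNormR_nonneg (A : Matrix (Fin m) (Fin n) ℝ) : 0 ≤ nuclearNormR A :=
  sum_nonneg fun _ _ => Real.sqrt_nonneg _

theorem trace_transpose_mul_le_l2_opNorm_mul_nuclearNormR (W X : Matrix (Fin m) (Fin n) ℝ) :
    trace (Wᵀ * X) ≤ ‖W‖ * nuclearNormR X := by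
  set hX := isHermitian_transpose_mul_self X
  obtain ⟨Q, hQ, hQ', hXQ⟩ := hX.exists_orthogonal_transpose_mul_mul_eq_diagonal
  have hcolX (j) : ∑ a, (X * Q) a j ^ 2 = hX.eigenvalues j := by
    have : (X * Q)ᵀ * (X * Q) = diagonal hX.eigenvalues := by
      rw [← hXQ]; simp only [transpose_mul, Matrix.mul_assoc]
    rw [sum_sq_apply_eq_transpose_mul_self_apply, this, diagonal_apply_eq]
  have hcolW (j) : √(∑ a, (W * Q) a j ^ 2) ≤ ‖W‖ := by
    refine Real.sqrt_le_iff.2 ⟨norm_nonneg W, ((W * Q).sum_sq_apply_le_l2_opNorm_sq j).trans ?_⟩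
    have := (l2_opNorm_mul W Q).trans
      (mul_le_of_le_one_right (norm_nonneg W) (Q.l2_opNorm_le_one_of_transpose_mul_self_eq_one hQ))
    gcongr
  have hWXQ : (W * Q)ᵀ * (X * Q) = Qᵀ * (Wᵀ * X * Q) := by
    simp only [transpose_mul, Matrix.mul_assoc]
  calc trace (Wᵀ * X) = trace ((W * Q)ᵀ * (X * Q)) := by
        rw [hWXQ, trace_mul_comm Qᵀ, Matrix.mul_assoc _ Q, hQ', Matrix.mul_one]
    _ = ∑ j, ∑ a, (W * Q) a j * (X * Q) a j := by
        rw [trace_transpose_mul_eq_sum_sum, sum_comm]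
    _ ≤ ∑ j, √(∑ a, (W * Q) a j ^ 2) * √(∑ a, (X * Q) a j ^ 2) :=
        sum_le_sum fun j _ => Real.sum_mul_le_sqrt_mul_sqrt _ _ _
    _ ≤ ∑ j, ‖W‖ * √(hX.eigenvalues j) := by
        gcongr with j
        · exact hcolW j
        · exact (hcolX j).le
    _ = ‖W‖ * nuclearNormR X := by rw [← mul_sum]; rfl

theorem exists_l2_opNorm_le_one_trace_transpose_mul_eq_nuclearNormR
    (X : Matrix (Fin m) (Fin n) ℝ) :
    ∃ W : Matrix (Fin m) (Fin n) ℝ, ‖W‖ ≤ 1 ∧ trace (Wᵀ * X) = nuclearNormR X := by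
  set hX := isHermitian_transpose_mul_self X
  obtain ⟨Q, hQ, hQ', hXQ⟩ := hX.exists_orthogonal_transpose_mul_mul_eq_diagonal
  set s : Fin n → ℝ := fun j => √(hX.eigenvalues j)
  have hs : hX.eigenvalues = s * s :=
    funext fun j => (Real.mul_self_sqrt (eigenvalues_conjTranspose_mul_self_nonneg X j)).symm
  -- the polar factor of `X`, using `0⁻¹ = 0` on the kernel
  set W := X * Q * diagonal s⁻¹ * Qᵀ
  have hWX : Wᵀ * X = Q * (diagonal s⁻¹ * (Qᵀ * (Xᵀ * X))) := by
    simp only [W, transpose_mul, diagonal_transpose, transpose_transpose, Matrix.mul_assoc]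
  have hWW : Wᵀ * W = Q * (diagonal s⁻¹ * diagonal (s * s) * diagonal s⁻¹) * Qᵀ := by
    rw [← hs, ← hXQ]
    simp only [W, transpose_mul, diagonal_transpose, transpose_transpose, Matrix.mul_assoc]
  refine ⟨W, W.l2_opNorm_le_one_of_l2_opNorm_transpose_mul_self_le_one ?_, ?_⟩
  · rw [hWW, diagonal_mul_diagonal, diagonal_mul_diagonal]
    refine l2_opNorm_mul_diagonal_mul_transpose_le hQ hQ zero_le_one fun j => ?_
    by_cases h : s j = 0 <;> simp [h]
  · rw [hWX, trace_mul_comm, Matrix.mul_assoc, Matrix.mul_assoc, ← Matrix.mul_assoc Qᵀ, hXQ, hs,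
      diagonal_mul_diagonal, trace_diagonal]
    refine sum_congr rfl fun j _ => ?_
    simp only [Pi.inv_apply, Pi.mul_apply, ← mul_assoc, inv_mul_mul_self]
    rfl

theorem nuclearNormR_mul_diagonal_mul_transpose_le {U : Matrix (Fin m) (Fin r) ℝ}
    {V : Matrix (Fin n) (Fin r) ℝ} (hU : Uᵀ * U = 1) (hV : Vᵀ * V = 1) {d : Fin r → ℝ}
    (hd : ∀ i, 0 ≤ d i) : nuclearNormR (U * diagonal d * Vᵀ) ≤ ∑ i, d i := by
  obtain ⟨W, hW, hWX⟩ := exists_l2_opNorm_le_one_trace_transpose_mul_eq_nuclearNormR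
    (U * diagonal d * Vᵀ)
  have hVt : ‖Vᵀ‖ ≤ 1 := V.l2_opNorm_transpose ▸ V.l2_opNorm_le_one_of_transpose_mul_self_eq_one hV
  have hM := l2_opNorm_mul_mul_le_of_le_one hVt
    (U.l2_opNorm_le_one_of_transpose_mul_self_eq_one hU) Wᵀ
  rw [l2_opNorm_transpose] at hM
  have hassoc : Wᵀ * (U * diagonal d * Vᵀ) = (Wᵀ * U * diagonal d) * Vᵀ := by
    simp only [Matrix.mul_assoc]
  calc nuclearNormR (U * diagonal d * Vᵀ) = trace (Vᵀ * (Wᵀ * U * diagonal d)) := by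
        rw [← hWX, hassoc, trace_mul_comm]
    _ = ∑ i, (Vᵀ * Wᵀ * U) i i * d i := by
        simp only [← Matrix.mul_assoc, trace, Matrix.diag, mul_diagonal]
    _ ≤ ∑ i, d i := sum_le_sum fun i _ => mul_le_of_le_one_left (hd i)
        (((Vᵀ * Wᵀ * U).apply_le_l2_opNorm i i).trans (hM.trans hW))

theorem objective_add_sq_dist_le_of_subgradient {τ : ℝ} {Y X₀ : Matrix (Fin m) (Fin n) ℝ}
    (hnorm : ‖Y - X₀‖ ≤ τ) (hX₀ : τ * nuclearNormR X₀ ≤ trace ((Y - X₀)ᵀ * X₀))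
    (X : Matrix (Fin m) (Fin n) ℝ) :
    τ * nuclearNormR X₀ + (∑ a, ∑ b, (X₀ a b - Y a b) ^ 2) / 2
        + (∑ a, ∑ b, (X a b - X₀ a b) ^ 2) / 2
      ≤ τ * nuclearNormR X + (∑ a, ∑ b, (X a b - Y a b) ^ 2) / 2 := by
  have hdual : trace ((Y - X₀)ᵀ * X) ≤ τ * nuclearNormR X :=
    (trace_transpose_mul_le_l2_opNorm_mul_nuclearNormR _ X).trans
      (mul_le_mul_of_nonneg_right hnorm (nuclearNormR_nonneg X))
  have hexpand : ∑ a, ∑ b, (X a b - Y a b) ^ 2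
      = ∑ a, ∑ b, (X a b - X₀ a b) ^ 2 - 2 * trace ((Y - X₀)ᵀ * X)
        + 2 * trace ((Y - X₀)ᵀ * X₀) + ∑ a, ∑ b, (X₀ a b - Y a b) ^ 2 := by
    simp only [trace_transpose_mul_eq_sum_sum, mul_sum, ← sum_sub_distrib, ← sum_add_distrib,
      Matrix.sub_apply]
    exact sum_congr rfl fun a _ => sum_congr rfl fun b _ => by ring
  linarith

end NuclearNorm

/-- Singular value thresholding: given an SVD Y = U diag(σ) Vᵀ, the matrix
U diag((σ−τ)₊) Vᵀ is the unique minimizer of X ↦ τ‖X‖_* + ½‖X−Y‖_F². -/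
theorem stmt8 {m n r : ℕ} (τ : ℝ) (hτ : 0 < τ)
    (Y : Matrix (Fin m) (Fin n) ℝ) (U : Matrix (Fin m) (Fin r) ℝ)
    (V : Matrix (Fin n) (Fin r) ℝ) (σ : Fin r → ℝ)
    (hU : Uᵀ * U = 1) (hV : Vᵀ * V = 1) (hσ : ∀ i, 0 ≤ σ i)
    (hY : Y = U * Matrix.diagonal σ * Vᵀ) :
    (∀ X : Matrix (Fin m) (Fin n) ℝ,
      τ * nuclearNormR (U * Matrix.diagonal (fun i => max (σ i - τ) 0) * Vᵀ) +
          (∑ a, ∑ b, ((U * Matrix.diagonal (fun i => max (σ i - τ) 0) * Vᵀ) a b - Y a b) ^ 2) / 2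
        ≤ τ * nuclearNormR X + (∑ a, ∑ b, (X a b - Y a b) ^ 2) / 2) ∧
    (∀ X : Matrix (Fin m) (Fin n) ℝ,
      τ * nuclearNormR X + (∑ a, ∑ b, (X a b - Y a b) ^ 2) / 2 =
          τ * nuclearNormR (U * Matrix.diagonal (fun i => max (σ i - τ) 0) * Vᵀ) +
            (∑ a, ∑ b, ((U * Matrix.diagonal (fun i => max (σ i - τ) 0) * Vᵀ) a b - Y a b) ^ 2) / 2
        → X = U * Matrix.diagonal (fun i => max (σ i - τ) 0) * Vᵀ) := by
  set d : Fin r → ℝ := fun i => max (σ i - τ) 0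
  set X₀ := U * diagonal d * Vᵀ
  have hYX₀ : Y - X₀ = U * diagonal (fun i => min (σ i) τ) * Vᵀ := by
    rw [hY, ← Matrix.sub_mul, ← Matrix.mul_sub, diagonal_sub]
    congr 3 with i
    rcases le_total (σ i) τ with h | h <;> simp [d, h]
  have hnorm : ‖Y - X₀‖ ≤ τ := hYX₀ ▸ l2_opNorm_mul_diagonal_mul_transpose_le hU hV hτ.le
    fun i => abs_le.2 ⟨le_min (by linarith [hσ i]) (by linarith), min_le_right _ _⟩
  have hX₀ : τ * nuclearNormR X₀ ≤ trace ((Y - X₀)ᵀ * X₀) :=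
    calc τ * nuclearNormR X₀ ≤ τ * ∑ i, d i := mul_le_mul_of_nonneg_left
          (nuclearNormR_mul_diagonal_mul_transpose_le hU hV fun i => le_max_right _ _) hτ.le
      _ = ∑ i, min (σ i) τ * d i := by
          rw [mul_sum]
          exact sum_congr rfl fun i _ => by rcases le_total (σ i) τ with h | h <;> simp [d, h]
      _ = trace ((Y - X₀)ᵀ * X₀) := by rw [hYX₀, trace_transpose_mul_diagonal_mul_transpose hU hV]
  have hgap := objective_add_sq_dist_le_of_subgradient hnorm hX₀
  refine ⟨fun X => ?_, fun X hX => ?_⟩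
  · linarith [hgap X, show 0 ≤ ∑ a, ∑ b, (X a b - X₀ a b) ^ 2 by positivity]
  · have hsq : ∑ a, ∑ b, (X a b - X₀ a b) ^ 2 = 0 :=
      le_antisymm (by linarith [hgap X]) (by positivity)
    rw [← sub_eq_zero, ← trace_conjTranspose_mul_self_eq_zero_iff,
      conjTranspose_eq_transpose_of_trivial, trace_transpose_mul_self_eq_sum_sum_sq]
    simpa only [Matrix.sub_apply] using hsq
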